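/- For every integer a and every sign ε ∈ {1, −1}, the group Π(a, ε, −ε, 1) is isomorphic to Π(a, −ε, ε, 1). -/

import Mathlib

/-- The relator set of the presentation
`⟨s₁, s₂, s₃ ∣ s₁s₂s₁⁻¹ = s₃^a s₂^ε, s₁s₃s₁⁻¹ = s₃^{ε₁}, s₂s₃s₂⁻¹ = s₃^{ε₂}⟩`. -/
def PiRels (a ε ε₁ ε₂ : ℤ) : Set (FreeGroup (Fin 3)) :=
  { FreeGroup.of 0 * FreeGroup.of 1 * (FreeGroup.of 0)⁻¹ * FreeGroup.of 1 ^ (-ε) *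
      FreeGroup.of 2 ^ (-a),
    FreeGroup.of 0 * FreeGroup.of 2 * (FreeGroup.of 0)⁻¹ * FreeGroup.of 2 ^ (-ε₁),
    FreeGroup.of 1 * FreeGroup.of 2 * (FreeGroup.of 1)⁻¹ * FreeGroup.of 2 ^ (-ε₂) }

/-- The group `Π(a, ε, ε₁, ε₂)` with presentation
`⟨s₁, s₂, s₃ ∣ s₁s₂s₁⁻¹ = s₃^a s₂^ε, s₁s₃s₁⁻¹ = s₃^{ε₁}, s₂s₃s₂⁻¹ = s₃^{ε₂}⟩`. -/
abbrev PiGroup (a ε ε₁ ε₂ : ℤ) : Type := PresentedGroup (PiRels a ε ε₁ ε₂)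

/-!
When `ε₂ = 1`, the generators `s₂, s₃` commute and `s₁` acts on the words `s₂ ^ b * s₃ ^ c` by the
integer matrix `!![ε, 0; a, ε₁]` on the exponent vector `(b, c)`, so `Π(a, ε, ε₁, 1)` is a
semidirect product `ℤ² ⋊ ℤ` with this monodromy. Matrices conjugate in `GL₂(ℤ)` give isomorphic
groups: fix `s₁` and send `s₂, s₃` to the words whose exponent vectors are the columns of the
conjugating matrix. For `!![1, 0; a, -1]` and `!![-1, 0; a, 1]`, a conjugating matrix
`!![p, q; r, p]` only has to satisfy `2 p = -a q` and `p ^ 2 - q r = 1`, which is solvable for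
either parity of `a`.
-/

open scoped Matrix

section zpowPair

variable {G H F : Type*} [Group G] [Group H] [FunLike F G H] [MonoidHomClass F G H] {y z : G}

def zpowPair (y z : G) (v : Fin 2 → ℤ) : G := y ^ v 0 * z ^ v 1

@[simp]
lemma zpowPair_single_zero (y z : G) : zpowPair y z (Pi.single 0 1) = y := by
  simp [zpowPair]

@[simp]
lemma zpowPair_single_one (y z : G) : zpowPair y z (Pi.single 1 1) = z := by
  simp [zpowPair]

lemma map_zpowPair (f : F) (y z : G) (v : Fin 2 → ℤ) :
    f (zpowPair y z v) = zpowPair (f y) (f z) v := by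
  simp [zpowPair]

lemma Commute.zpowPair_add (h : Commute y z) (u v : Fin 2 → ℤ) :
    zpowPair y z (u + v) = zpowPair y z u * zpowPair y z v := by
  simp only [zpowPair, Pi.add_apply, zpow_add, mul_assoc]
  rw [(h.zpow_zpow (v 0) (u 1)).left_comm]

lemma Commute.zpowPair_zsmul (h : Commute y z) (n : ℤ) (v : Fin 2 → ℤ) :
    zpowPair y z (n • v) = zpowPair y z v ^ n := by
  simp only [zpowPair, Pi.smul_apply, smul_eq_mul, (h.zpow_zpow _ _).mul_zpow, mul_comm n,
    zpow_mul]

lemma Commute.zpowPair_zpowPair (h : Commute y z) (u v : Fin 2 → ℤ) :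
    Commute (zpowPair y z u) (zpowPair y z v) := by
  rw [Commute, SemiconjBy, ← h.zpowPair_add, ← h.zpowPair_add, add_comm]

lemma Commute.zpowPair_mulVec (h : Commute y z) (A : Matrix (Fin 2) (Fin 2) ℤ)
    (v : Fin 2 → ℤ) :
    zpowPair (zpowPair y z (A *ᵥ Pi.single 0 1)) (zpowPair y z (A *ᵥ Pi.single 1 1)) v =
      zpowPair y z (A *ᵥ v) := by
  have hv : v = v 0 • Pi.single 0 1 + v 1 • Pi.single 1 1 := by
    ext i; fin_cases i <;> simp
  conv_rhs => rw [hv, Matrix.mulVec_add, Matrix.mulVec_smul, Matrix.mulVec_smul,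
    h.zpowPair_add, h.zpowPair_zsmul, h.zpowPair_zsmul]
  rfl

end zpowPair

namespace PiGroup

variable {a ε ε₁ ε₂ : ℤ}

def s₁ : PiGroup a ε ε₁ ε₂ := PresentedGroup.of 0
def s₂ : PiGroup a ε ε₁ ε₂ := PresentedGroup.of 1
def s₃ : PiGroup a ε ε₁ ε₂ := PresentedGroup.of 2

lemma s₁_conj_s₂ : (s₁ : PiGroup a ε ε₁ ε₂) * s₂ * s₁⁻¹ = s₃ ^ a * s₂ ^ ε := by
  have h := PresentedGroup.one_of_mem (rels := PiRels a ε ε₁ ε₂) (Set.mem_insert _ _)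
  simp only [map_mul, map_inv, map_zpow, zpow_neg] at h
  exact mul_inv_eq_iff_eq_mul.mp (mul_inv_eq_one.mp h)

lemma s₁_conj_s₃ : (s₁ : PiGroup a ε ε₁ ε₂) * s₃ * s₁⁻¹ = s₃ ^ ε₁ := by
  have h := PresentedGroup.one_of_mem (rels := PiRels a ε ε₁ ε₂)
    (Set.mem_insert_of_mem _ (Set.mem_insert _ _))
  simp only [map_mul, map_inv, map_zpow, zpow_neg] at h
  exact mul_inv_eq_one.mp h

lemma s₂_conj_s₃ : (s₂ : PiGroup a ε ε₁ ε₂) * s₃ * s₂⁻¹ = s₃ ^ ε₂ := by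
  have h := PresentedGroup.one_of_mem (rels := PiRels a ε ε₁ ε₂)
    (Set.mem_insert_of_mem _ (Set.mem_insert_of_mem _ rfl))
  simp only [map_mul, map_inv, map_zpow, zpow_neg] at h
  exact mul_inv_eq_one.mp h

section lift

variable {G : Type*} [Group G] (x y z : G) (h₁ : x * y * x⁻¹ = z ^ a * y ^ ε)
  (h₂ : x * z * x⁻¹ = z ^ ε₁) (h₃ : y * z * y⁻¹ = z ^ ε₂)

def lift : PiGroup a ε ε₁ ε₂ →* G :=
  PresentedGroup.toGroup (f := ![x, y, z]) <| by
    rintro _ (rfl | rfl | rfl) <;> simp [h₁, h₂, h₃]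

@[simp] lemma lift_s₁ : lift x y z h₁ h₂ h₃ s₁ = x := PresentedGroup.toGroup.of _
@[simp] lemma lift_s₂ : lift x y z h₁ h₂ h₃ s₂ = y := PresentedGroup.toGroup.of _
@[simp] lemma lift_s₃ : lift x y z h₁ h₂ h₃ s₃ = z := PresentedGroup.toGroup.of _

end lift

lemma commute_s₂_s₃ : Commute (s₂ : PiGroup a ε ε₁ 1) s₃ :=
  mul_inv_eq_iff_eq_mul.mp (zpow_one (s₃ : PiGroup a ε ε₁ 1) ▸ s₂_conj_s₃)

def monodromy (a ε ε₁ : ℤ) : Matrix (Fin 2) (Fin 2) ℤ := !![ε, 0; a, ε₁]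

lemma monodromy_mulVec_single_zero :
    monodromy a ε ε₁ *ᵥ Pi.single 0 1 = a • Pi.single 1 1 + ε • Pi.single 0 1 := by
  ext i; fin_cases i <;> simp [monodromy]

lemma monodromy_mulVec_single_one :
    monodromy a ε ε₁ *ᵥ Pi.single 1 1 = ε₁ • Pi.single 1 1 := by
  ext i; fin_cases i <;> simp [monodromy]

lemma s₁_conj_zpowPair (v : Fin 2 → ℤ) :
    (s₁ : PiGroup a ε ε₁ 1) * zpowPair s₂ s₃ v * s₁⁻¹ =
      zpowPair s₂ s₃ (monodromy a ε ε₁ *ᵥ v) := by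
  have hc := commute_s₂_s₃ (a := a) (ε := ε) (ε₁ := ε₁)
  have h₂ : (s₁ : PiGroup a ε ε₁ 1) * s₂ * s₁⁻¹ =
      zpowPair s₂ s₃ (monodromy a ε ε₁ *ᵥ Pi.single 0 1) := by
    rw [monodromy_mulVec_single_zero, hc.zpowPair_add, hc.zpowPair_zsmul, hc.zpowPair_zsmul,
      zpowPair_single_zero, zpowPair_single_one, s₁_conj_s₂]
  have h₃ : (s₁ : PiGroup a ε ε₁ 1) * s₃ * s₁⁻¹ =
      zpowPair s₂ s₃ (monodromy a ε ε₁ *ᵥ Pi.single 1 1) := by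
    rw [monodromy_mulVec_single_one, hc.zpowPair_zsmul, zpowPair_single_one, s₁_conj_s₃]
  calc (s₁ : PiGroup a ε ε₁ 1) * zpowPair s₂ s₃ v * s₁⁻¹
      = zpowPair (s₁ * s₂ * s₁⁻¹) (s₁ * s₃ * s₁⁻¹) v := by
        simpa only [MulAut.conj_apply] using map_zpowPair (MulAut.conj s₁) s₂ s₃ v
    _ = zpowPair s₂ s₃ (monodromy a ε ε₁ *ᵥ v) := by rw [h₂, h₃, hc.zpowPair_mulVec]

section ofConj

variable {a' ε' ε₁' : ℤ} (P : Matrix (Fin 2) (Fin 2) ℤ)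

lemma s₁_conj_zpowPair_mulVec (hP : monodromy a' ε' ε₁' * P = P * monodromy a ε ε₁)
    (v : Fin 2 → ℤ) :
    (s₁ : PiGroup a' ε' ε₁' 1) * zpowPair s₂ s₃ (P *ᵥ v) * s₁⁻¹ =
      zpowPair s₂ s₃ (P *ᵥ (monodromy a ε ε₁ *ᵥ v)) := by
  rw [s₁_conj_zpowPair, Matrix.mulVec_mulVec, hP, Matrix.mulVec_mulVec]

def ofConj (hP : monodromy a' ε' ε₁' * P = P * monodromy a ε ε₁) :
    PiGroup a ε ε₁ 1 →* PiGroup a' ε' ε₁' 1 :=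
  lift s₁ (zpowPair s₂ s₃ (P *ᵥ Pi.single 0 1)) (zpowPair s₂ s₃ (P *ᵥ Pi.single 1 1))
    (by
      rw [s₁_conj_zpowPair_mulVec P hP, monodromy_mulVec_single_zero, Matrix.mulVec_add,
        Matrix.mulVec_smul, Matrix.mulVec_smul, commute_s₂_s₃.zpowPair_add,
        commute_s₂_s₃.zpowPair_zsmul, commute_s₂_s₃.zpowPair_zsmul])
    (by
      rw [s₁_conj_zpowPair_mulVec P hP, monodromy_mulVec_single_one, Matrix.mulVec_smul,
        commute_s₂_s₃.zpowPair_zsmul])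
    (by rw [zpow_one, mul_inv_eq_iff_eq_mul]; exact commute_s₂_s₃.zpowPair_zpowPair _ _)

variable (hP : monodromy a' ε' ε₁' * P = P * monodromy a ε ε₁)

@[simp] lemma ofConj_s₁ : ofConj P hP s₁ = s₁ := lift_s₁ ..

lemma ofConj_zpowPair (v : Fin 2 → ℤ) :
    ofConj P hP (zpowPair s₂ s₃ v) = zpowPair s₂ s₃ (P *ᵥ v) := by
  rw [map_zpowPair, ofConj, lift_s₂, lift_s₃, commute_s₂_s₃.zpowPair_mulVec]

end ofConj

lemma ofConj_comp_ofConj {a' ε' ε₁' : ℤ} {P Q : Matrix (Fin 2) (Fin 2) ℤ}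
    (hP : monodromy a' ε' ε₁' * P = P * monodromy a ε ε₁)
    (hQ : monodromy a ε ε₁ * Q = Q * monodromy a' ε' ε₁') (hQP : Q * P = 1) :
    (ofConj Q hQ).comp (ofConj P hP) = MonoidHom.id _ := by
  have key (v : Fin 2 → ℤ) :
      ofConj Q hQ (ofConj P hP (zpowPair s₂ s₃ v)) = zpowPair s₂ s₃ v := by
    rw [ofConj_zpowPair, ofConj_zpowPair, Matrix.mulVec_mulVec, hQP, Matrix.one_mulVec]
  refine PresentedGroup.ext fun i => ?_
  fin_cases i
  · show ofConj Q hQ (ofConj P hP s₁) = s₁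
    simp
  · show ofConj Q hQ (ofConj P hP s₂) = s₂
    simpa using key (Pi.single 0 1)
  · show ofConj Q hQ (ofConj P hP s₃) = s₃
    simpa using key (Pi.single 1 1)

def mulEquivOfConj {a' ε' ε₁' : ℤ} (P : (Matrix (Fin 2) (Fin 2) ℤ)ˣ)
    (hP : monodromy a' ε' ε₁' * P.val = P.val * monodromy a ε ε₁) :
    PiGroup a ε ε₁ 1 ≃* PiGroup a' ε' ε₁' 1 :=
  have hP' : monodromy a ε ε₁ * P.inv = P.inv * monodromy a' ε' ε₁' :=
    calc monodromy a ε ε₁ * P.inv = P.inv * (P.val * monodromy a ε ε₁) * P.inv := by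
          rw [← mul_assoc, P.inv_val, one_mul]
      _ = P.inv * monodromy a' ε' ε₁' := by
          rw [← hP, mul_assoc, mul_assoc, P.val_inv, mul_one]
  MonoidHom.toMulEquiv (ofConj P.val hP) (ofConj P.inv hP') (ofConj_comp_ofConj hP hP' P.inv_val)
    (ofConj_comp_ofConj hP' hP P.val_inv)

lemma monodromy_mul_eq_mul_monodromy (a p q r : ℤ) (h : 2 * p = -(a * q)) :
    monodromy a (-1) 1 * !![p, q; r, p] = !![p, q; r, p] * monodromy a 1 (-1) := by
  simp only [monodromy, Matrix.mul_fin_two]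
  congr 1
  simp only [Int.reduceNeg, neg_mul, one_mul, zero_mul, add_zero, mul_one, mul_zero, mul_neg,
    zero_add, Matrix.vecCons_inj, and_true]
  exact ⟨by linear_combination -h, by ring, by linear_combination h⟩

lemma exists_unit_monodromy_conj (a : ℤ) :
    ∃ P : (Matrix (Fin 2) (Fin 2) ℤ)ˣ,
      monodromy a (-1) 1 * P.val = P.val * monodromy a 1 (-1) := by
  obtain ⟨p, q, r, h2p, hdet⟩ : ∃ p q r : ℤ, 2 * p = -(a * q) ∧ p * p - q * r = 1 := by
    rcases Int.even_or_odd' a with ⟨k, rfl | rfl⟩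
    · exact ⟨-k, 1, k * k - 1, by ring, by ring⟩
    · exact ⟨-(2 * k + 1), 2, 2 * k * k + 2 * k, by ring, by ring⟩
  exact ⟨Matrix.nonsingInvUnit !![p, q; r, p] (by simp [Matrix.det_fin_two_of, hdet]),
    monodromy_mul_eq_mul_monodromy a p q r h2p⟩

end PiGroup

/-- `Π(a, ε, −ε, 1) ≅ Π(a, −ε, ε, 1)`. -/
theorem PiGroup_iso_neg_sign (a ε : ℤ) (hε : ε = 1 ∨ ε = -1) :
    Nonempty (PiGroup a ε (-ε) 1 ≃* PiGroup a (-ε) ε 1) := by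
  obtain ⟨P, hP⟩ := PiGroup.exists_unit_monodromy_conj a
  rcases hε with rfl | rfl
  · exact ⟨PiGroup.mulEquivOfConj P hP⟩
  · exact ⟨(PiGroup.mulEquivOfConj P hP).symm⟩
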